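/- If ν is translation-invariant and ergodic, and u ∈ L²_vec(ν) satisfies the cycle condition, then the orthogonal projection P_j u of u onto the kernel of (1 - T_j) in L²_vec(ν) is ν-a.s. equal to the constant E_ν(P_j u), for each coordinate shift T_j. -/

import Mathlib

open MeasureTheory Real Filter ProbabilityTheory
open scoped ENNReal

noncomputable section

variable {d : ℕ}
/-- Positively oriented edges of `ℤ^d`: a base point together with a direction. -/
abbrev EdgeZ (d : ℕ) := ((Fin d → ℤ) × Fin d)

/-- Configurations indexed by (positively oriented) edges: gradients or conductances. -/
abbrev Cfg (d : ℕ) := EdgeZ d → ℝ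

/-- `sv j n` is `n` times the `j`-th coordinate unit vector of `ℤ^d`. -/
def sv (j : Fin d) (n : ℤ) : Fin d → ℤ := fun i => if i = j then n else 0

/-- Shift of a configuration by a lattice vector `x`. -/
def shf (x : Fin d → ℤ) (κ : Cfg d) : Cfg d := fun e => κ (e.1 + x, e.2)

/-- Translation invariance of a measure on configurations. -/
def TInv (ν : Measure (Cfg d)) : Prop := ∀ x, ν.map (shf x) = ν

/-- Ergodicity with respect to the group of lattice shifts. -/
def Erg (ν : Measure (Cfg d)) : Prop :=
  ∀ A : Set (Cfg d), MeasurableSet A → (∀ x, shf x ⁻¹' A = A) → ν A = 0 ∨ ν A = 1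

/-- Uniform ellipticity: `ε ≤ κ_b ≤ 1/ε` almost surely. -/
def Elliptic (ν : Measure (Cfg d)) : Prop :=
  ∃ ε : ℝ, 0 < ε ∧ ∀ᵐ κ ∂ν, ∀ e, ε ≤ κ e ∧ κ e ≤ 1 / ε
/-- A local function of the environment: depends on finitely many edges. -/
def IsLocal (h : Cfg d → ℝ) : Prop :=
  ∃ S : Finset (EdgeZ d), ∀ κ κ' : Cfg d, (∀ e ∈ S, κ e = κ' e) → h κ = h κ'

/-- The gradient `(∇h)_j = h ∘ τ_{ê_j} - h` of a function of the environment. -/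
def grad (h : Cfg d → ℝ) : Cfg d → Fin d → ℝ :=
  fun κ j => h (shf (sv j 1) κ) - h κ

/-- The `L²_vec(ν)` inner product `(u,v) = E_ν[Σ_b κ_b u(κ,b) v(κ,b)]`. -/
def ivec (ν : Measure (Cfg d)) (u v : Cfg d → Fin d → ℝ) : ℝ :=
  ∫ κ, ∑ j, κ (0, j) * u κ j * v κ j ∂ν

/-- Square integrability with respect to `ν`. -/
def SqInt (ν : Measure (Cfg d)) (h : Cfg d → ℝ) : Prop :=
  ∫⁻ κ, ENNReal.ofReal ((h κ) ^ 2) ∂ν < ⊤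

/-- Membership in `L²_vec(ν)`: measurable components, each square integrable. -/
def MemL2vec (ν : Measure (Cfg d)) (u : Cfg d → Fin d → ℝ) : Prop :=
  (∀ j, Measurable fun κ => u κ j) ∧ ∀ j, SqInt ν fun κ => u κ j

/-- Membership in `L²_∇(ν)`, the closure in the `L²_vec(ν)` norm of gradients of
local functions. -/
def MemGradClos (ν : Measure (Cfg d)) (u : Cfg d → Fin d → ℝ) : Prop :=
  ∀ δ : ℝ, 0 < δ → ∃ h : Cfg d → ℝ, IsLocal h ∧ Measurable h ∧
    ∫⁻ κ, ENNReal.ofReal (∑ j, κ (0, j) * (u κ j - grad h κ j) ^ 2) ∂ν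
      < ENNReal.ofReal δ

/-- The extension of a vector field to negative directions: `u(κ,-b) = -u(τ_{-b}κ, b)`.
A signed step is a pair `(j, s)` with `s = true` for `+ê_j`, `false` for `-ê_j`. -/
def uExt (u : Cfg d → Fin d → ℝ) (κ : Cfg d) (s : Fin d × Bool) : ℝ :=
  if s.2 then u κ s.1 else -u (shf (-sv s.1 1) κ) s.1

/-- The lattice displacement of a signed step. -/
def stepOf (s : Fin d × Bool) : Fin d → ℤ :=
  if s.2 then sv s.1 1 else -sv s.1 1

/-- The sum of a vector field along a nearest-neighbor path started at the origin,
written in environment coordinates. -/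
def pathSum (u : Cfg d → Fin d → ℝ) : Cfg d → List (Fin d × Bool) → ℝ
  | _, [] => 0
  | κ, s :: r => uExt u κ s + pathSum u (shf (stepOf s) κ) r

/-- The cycle condition: the sum of the field along every closed nearest-neighbor
loop vanishes. -/
def CycleCond (u : Cfg d → Fin d → ℝ) (κ : Cfg d) : Prop :=
  ∀ ℓ : List (Fin d × Bool), (ℓ.map stepOf).sum = 0 → pathSum u κ ℓ = 0

/-- The divergence `(Lu)(κ) = Σ_b [κ_b u(κ,b) - (τ_{-b}κ)_b u(τ_{-b}κ,b)]`. -/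
def divg (u : Cfg d → Fin d → ℝ) (κ : Cfg d) : ℝ :=
  ∑ j, (κ (0, j) * u κ j
    - shf (-sv j 1) κ (0, j) * u (shf (-sv j 1) κ) j)

/-!
The cycle condition around a unit square says that the `ê_i`-coboundary `T_i u_j - u_j` equals
the `ê_j`-coboundary `T_j u_i - u_i`. Since `T_i p` is again `T_j`-invariant, it is orthogonal
to `T_j`-coboundaries and to `u_j - p`, so
`⟨p, T_i p⟩ = ⟨u_j, T_i p⟩ = ⟨T_i u_j, T_i p⟩ = ⟨u_j, p⟩ = ‖p‖²`, whence `‖T_i p - p‖ = 0`.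
Thus `p` is a.e. invariant under every lattice shift, and ergodicity makes it a.e. constant.
-/

namespace MeasureTheory

variable {Ω : Type*} [MeasurableSpace Ω] {μ : Measure Ω}

theorem MemLp.integrable_mul_of_two {f g : Ω → ℝ} (hf : MemLp f 2 μ) (hg : MemLp g 2 μ) :
    Integrable (fun x => f x * g x) μ :=
  hf.integrable_mul hg

theorem MeasurePreserving.integral_comp_of_aestronglyMeasurable {T : Ω → Ω}
    (hT : MeasurePreserving T μ μ) {F : Ω → ℝ} (hF : AEStronglyMeasurable F μ) :
    ∫ x, F (T x) ∂μ = ∫ x, F x ∂μ := by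
  have := integral_map hT.measurable.aemeasurable (hT.map_eq.symm ▸ hF)
  rwa [hT.map_eq, eq_comm] at this

theorem integral_comp_mul_eq_of_comp_ae_eq {T : Ω → Ω} (hT : MeasurePreserving T μ μ)
    {g q : Ω → ℝ} (hg : AEStronglyMeasurable g μ) (hq : AEStronglyMeasurable q μ)
    (hqT : q ∘ T =ᵐ[μ] q) :
    ∫ x, g (T x) * q x ∂μ = ∫ x, g x * q x ∂μ :=
  calc ∫ x, g (T x) * q x ∂μ = ∫ x, g (T x) * q (T x) ∂μ :=
        integral_congr_ae (hqT.mono fun x hx => by simp only [← hx, Function.comp_apply])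
    _ = ∫ x, g x * q x ∂μ := hT.integral_comp_of_aestronglyMeasurable (hg.mul hq)

theorem integral_comp_mul_eq_of_coboundary {S T : Ω → Ω} (hS : MeasurePreserving S μ μ)
    (hT : MeasurePreserving T μ μ) {f g q : Ω → ℝ} (hf : MemLp f 2 μ) (hg : MemLp g 2 μ)
    (hcob : f ∘ S - f =ᵐ[μ] g ∘ T - g) (hq : MemLp q 2 μ) (hqT : q ∘ T =ᵐ[μ] q) :
    ∫ x, f (S x) * q x ∂μ = ∫ x, f x * q x ∂μ := by
  have h : ∫ x, (f (S x) - f x) * q x ∂μ = ∫ x, (g (T x) - g x) * q x ∂μ :=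
    integral_congr_ae (hcob.mono fun x hx => by simpa using congrArg (· * q x) hx)
  simp_rw [sub_mul] at h
  rwa [integral_sub (f := fun x => f (S x) * q x)
      ((hf.comp_measurePreserving hS).integrable_mul_of_two hq) (hf.integrable_mul_of_two hq),
    integral_sub (f := fun x => g (T x) * q x)
      ((hg.comp_measurePreserving hT).integrable_mul_of_two hq) (hg.integrable_mul_of_two hq),
    integral_comp_mul_eq_of_comp_ae_eq hT hg.1 hq.1 hqT, sub_self, sub_eq_zero] at h

theorem comp_ae_eq_of_invariantProjection_of_coboundary {S T : Ω → Ω}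
    (hS : MeasurePreserving S μ μ) (hT : MeasurePreserving T μ μ) (hST : Function.Commute S T)
    {f g p : Ω → ℝ} (hf : MemLp f 2 μ) (hg : MemLp g 2 μ) (hcob : f ∘ S - f =ᵐ[μ] g ∘ T - g)
    (hpm : Measurable p) (hp : MemLp p 2 μ) (hpT : p ∘ T =ᵐ[μ] p)
    (hproj : ∀ q : Ω → ℝ, Measurable q → MemLp q 2 μ → q ∘ T =ᵐ[μ] q →
      ∫ x, (f x - p x) * q x ∂μ = 0) :
    p ∘ S =ᵐ[μ] p := by
  set P := p ∘ S
  have hPL : MemLp P 2 μ := hp.comp_measurePreserving hS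
  have hPT : P ∘ T =ᵐ[μ] P := by
    filter_upwards [hS.quasiMeasurePreserving.ae_eq_comp hpT] with x hx
    simpa [P, hST x] using hx
  have orth : ∀ q : Ω → ℝ, Measurable q → MemLp q 2 μ → q ∘ T =ᵐ[μ] q →
      ∫ x, f x * q x ∂μ = ∫ x, p x * q x ∂μ := by
    intro q hqm hq hqT
    have := hproj q hqm hq hqT
    simp_rw [sub_mul] at this
    rwa [integral_sub (hf.integrable_mul_of_two hq) (hp.integrable_mul_of_two hq),
      sub_eq_zero] at this
  have hfP : ∫ x, f x * P x ∂μ = ∫ x, f x * p x ∂μ :=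
    (integral_comp_mul_eq_of_coboundary hS hT hf hg hcob hPL hPT).symm.trans
      (hS.integral_comp_of_aestronglyMeasurable (hf.1.mul hp.1))
  have hPP : ∫ x, P x * P x ∂μ = ∫ x, p x * p x ∂μ :=
    hS.integral_comp_of_aestronglyMeasurable (hp.1.mul hp.1)
  have hsq : ∫ x, (P x - p x) ^ 2 ∂μ = 0 := by
    have hpP := orth P (hpm.comp hS.measurable) hPL hPT
    have hpp := orth p hpm hp hpT
    have hPPi := hPL.integrable_mul_of_two hPL
    have hpPi := (hp.integrable_mul_of_two hPL).const_mul 2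
    have hppi := hp.integrable_mul_of_two hp
    simp_rw [show ∀ x, (P x - p x) ^ 2 = P x * P x - 2 * (p x * P x) + p x * p x from
      fun x => by ring]
    rw [integral_add (f := fun x => P x * P x - 2 * (p x * P x)) (hPPi.sub hpPi) hppi,
      integral_sub hPPi hpPi, integral_const_mul]
    linarith
  have hzero := (integral_eq_zero_iff_of_nonneg_ae (.of_forall fun x => sq_nonneg _)
    (hPL.sub hp).integrable_sq).1 hsq
  filter_upwards [hzero] with x hx
  simpa [sub_eq_zero] using hx

end MeasureTheory

theorem shf_shf (x y : Fin d → ℤ) (κ : Cfg d) : shf x (shf y κ) = shf (x + y) κ := by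
  funext e; simp [shf, add_assoc]

@[simp]
theorem shf_zero (κ : Cfg d) : shf 0 κ = κ := by
  funext e; simp [shf]

theorem shf_commute (x y : Fin d → ℤ) : Function.Commute (shf (d := d) x) (shf y) :=
  fun κ => by rw [shf_shf, shf_shf, add_comm]

theorem measurable_shf (x : Fin d → ℤ) : Measurable (shf (d := d) x) :=
  measurable_pi_lambda _ fun _ => measurable_pi_apply _

theorem sv_eq_single (j : Fin d) (n : ℤ) : sv j n = Pi.single j n := by
  funext i; simp [sv, Pi.single_apply]

section Invariance

variable {ν : Measure (Cfg d)}

theorem TInv.measurePreserving_shf (hTI : TInv ν) (x : Fin d → ℤ) :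
    MeasurePreserving (shf x) ν ν :=
  ⟨measurable_shf x, hTI x⟩

theorem TInv.comp_shf_ae_eq_of_forall_unit (hTI : TInv ν) {β : Type*} {p : Cfg d → β}
    (hp : ∀ i, p ∘ shf (sv i 1) =ᵐ[ν] p) (x : Fin d → ℤ) : p ∘ shf x =ᵐ[ν] p := by
  let H : AddSubgroup (Fin d → ℤ) :=
    { carrier := {x | p ∘ shf x =ᵐ[ν] p}
      zero_mem' := show p ∘ shf 0 =ᵐ[ν] p from .of_forall fun κ => congrArg p (shf_zero κ)
      add_mem' := fun {x y} (hx : p ∘ shf x =ᵐ[ν] p) (hy : p ∘ shf y =ᵐ[ν] p) => by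
        show p ∘ shf (x + y) =ᵐ[ν] p
        have := (hTI.measurePreserving_shf y).quasiMeasurePreserving.ae_eq_comp hx
        filter_upwards [this, hy] with κ h1 h2
        simpa [shf_shf] using h1.trans h2
      neg_mem' := fun {x} (hx : p ∘ shf x =ᵐ[ν] p) => by
        show p ∘ shf (-x) =ᵐ[ν] p
        have := (hTI.measurePreserving_shf (-x)).quasiMeasurePreserving.ae_eq_comp hx
        filter_upwards [this] with κ h
        simpa [shf_shf] using h.symm }
  have hx : x = ∑ i, x i • sv i 1 := by
    simp_rw [sv_eq_single]
    exact pi_eq_sum_univ' x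
  rw [hx]
  exact H.sum_mem fun i _ => H.zsmul_mem (hp i) (x i)

theorem Erg.ae_mem_or_ae_notMem [IsProbabilityMeasure ν] (hErg : Erg ν) {s : Set (Cfg d)}
    (hs : MeasurableSet s) (h : ∀ x, shf x ⁻¹' s =ᵐ[ν] s) :
    (∀ᵐ κ ∂ν, κ ∈ s) ∨ ∀ᵐ κ ∂ν, κ ∉ s := by
  set t := ⋂ x, shf x ⁻¹' s
  have hts : t =ᵐ[ν] s := by
    simpa only [Set.iInter_const] using Filter.EventuallyEq.countable_iInter h
  have ht : MeasurableSet t := .iInter fun x => measurable_shf x hs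
  have htinv (y : Fin d → ℤ) : shf y ⁻¹' t = t := by
    ext κ
    simp only [t, Set.mem_preimage, Set.mem_iInter, shf_shf]
    exact ⟨fun h x => by simpa using h (x - y), fun h x => h (x + y)⟩
  rw [← measure_eq_zero_iff_ae_notMem, ae_mem_iff_measure_eq hs.nullMeasurableSet,
    measure_univ, ← measure_congr hts]
  exact (hErg t ht htinv).symm

theorem Erg.exists_ae_eq_const [IsProbabilityMeasure ν] (hErg : Erg ν) {X : Type*}
    [MeasurableSpace X] [Nonempty X] [MeasurableSpace.CountablySeparated X] {p : Cfg d → X}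
    (hpm : Measurable p) (hp : ∀ x, p ∘ shf x =ᵐ[ν] p) : ∃ c, p =ᵐ[ν] Function.const _ c :=
  exists_eventuallyEq_const_of_forall_separating MeasurableSet fun U hU =>
    hErg.ae_mem_or_ae_notMem (hpm hU) fun x =>
      (hp x).mono fun _ hκ => congrArg (· ∈ U) hκ

end Invariance

theorem sqInt_iff_memLp {ν : Measure (Cfg d)} {h : Cfg d → ℝ} (hm : Measurable h) :
    SqInt ν h ↔ MemLp h 2 ν := by
  rw [memLp_two_iff_integrable_sq hm.aestronglyMeasurable, SqInt]
  simp_rw [← Real.enorm_eq_ofReal (sq_nonneg _)]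
  exact ⟨fun h2 => ⟨(hm.pow_const 2).aestronglyMeasurable, h2⟩, fun h2 => h2.2⟩

theorem MemL2vec.memLp {ν : Measure (Cfg d)} {u : Cfg d → Fin d → ℝ} (hu : MemL2vec ν u)
    (j : Fin d) : MemLp (fun κ => u κ j) 2 ν :=
  (sqInt_iff_memLp (hu.1 j)).1 (hu.2 j)

theorem CycleCond.unit_square {u : Cfg d → Fin d → ℝ} {κ : Cfg d} (hc : CycleCond u κ)
    (i k : Fin d) :
    u (shf (sv i 1) κ) k - u κ k = u (shf (sv k 1) κ) i - u κ i := by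
  have hloop : ([(i, true), (k, true), (i, false), (k, false)].map stepOf).sum = 0 := by
    funext m
    simp [stepOf, sv]
  have h := hc _ hloop
  simp only [pathSum, uExt, stepOf, shf_shf, if_true, Bool.false_eq_true, if_false,
    add_zero] at h
  rw [show -sv i 1 + (sv k 1 + sv i 1) = sv k 1 by abel,
    show -sv k 1 + sv k 1 = (0 : Fin d → ℤ) by abel, shf_zero] at h
  linarith

theorem projection_onto_shift_invariant_is_constant_general
    (ν : Measure (Cfg d)) [IsProbabilityMeasure ν]
    (hTI : TInv ν) (hErg : Erg ν)
    (u : Cfg d → Fin d → ℝ) (hu : MemL2vec ν u)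
    (hcycle : ∀ᵐ κ ∂ν, CycleCond u κ)
    (j : Fin d) (p : Cfg d → ℝ) (hpm : Measurable p) (hp2 : SqInt ν p)
    (hpinv : ∀ᵐ κ ∂ν, p (shf (sv j 1) κ) = p κ)
    (hproj : ∀ q : Cfg d → ℝ, Measurable q → SqInt ν q →
        (∀ᵐ κ ∂ν, q (shf (sv j 1) κ) = q κ) →
        ∫ κ, (u κ j - p κ) * q κ ∂ν = 0) :
    ∀ᵐ κ ∂ν, p κ = ∫ κ', p κ' ∂ν := by
  have hunit (i : Fin d) : p ∘ shf (sv i 1) =ᵐ[ν] p := by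
    refine comp_ae_eq_of_invariantProjection_of_coboundary (hTI.measurePreserving_shf _)
      (hTI.measurePreserving_shf _) (shf_commute _ _) (hu.memLp j) (hu.memLp i) ?_ hpm
      ((sqInt_iff_memLp hpm).1 hp2) hpinv
      fun q hqm hq hqT => hproj q hqm ((sqInt_iff_memLp hqm).2 hq) hqT
    filter_upwards [hcycle] with κ hκ
    exact hκ.unit_square i j
  obtain ⟨c, hc⟩ := hErg.exists_ae_eq_const hpm (hTI.comp_shf_ae_eq_of_forall_unit hunit)
  have hmean : ∫ κ, p κ ∂ν = c := by simp [integral_congr_ae hc]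
  rwa [hmean]

/-- Lemma on projections onto shift-invariant functions.
Let `ν` be translation-invariant and ergodic, and let `u ∈ L²_vec(ν)` satisfy the
cycle condition.  If `p` is the orthogonal projection of the component `u_j` onto
`Ker(1 - T_j)` in `L²(ν)` (i.e. `p` is `T_j`-invariant, square integrable, and
`u_j - p` is orthogonal to every `T_j`-invariant square-integrable function), then
`p` is `ν`-a.s. equal to the constant `E_ν(p)`. -/
theorem projection_onto_shift_invariant_is_constant
    (ν : Measure (Cfg d)) [IsProbabilityMeasure ν]
    (hTI : TInv ν) (hErg : Erg ν) (hEll : Elliptic ν)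
    (u : Cfg d → Fin d → ℝ) (hu : MemL2vec ν u)
    (hcycle : ∀ᵐ κ ∂ν, CycleCond u κ)
    (j : Fin d) (p : Cfg d → ℝ) (hpm : Measurable p) (hp2 : SqInt ν p)
    (hpinv : ∀ᵐ κ ∂ν, p (shf (sv j 1) κ) = p κ)
    (hproj : ∀ q : Cfg d → ℝ, Measurable q → SqInt ν q →
        (∀ᵐ κ ∂ν, q (shf (sv j 1) κ) = q κ) →
        ∫ κ, (u κ j - p κ) * q κ ∂ν = 0) :
    ∀ᵐ κ ∂ν, p κ = ∫ κ', p κ' ∂ν :=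
  projection_onto_shift_invariant_is_constant_general ν hTI hErg u hu hcycle j p hpm hp2 hpinv hproj
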